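/- In a finite-state MDP with undiscounted total cost, absorbing goal set G with zero cost, per-step costs c(b,u) ≥ c_min > 0, and at least one proper policy (a policy reaching G almost surely from every state), the optimal value function J* is the unique fixed point, among functions vanishing on G, of the Bellman operator (TJ)(b) = min_u [c(b,u) + Σ_{b'} p(b'|b,u) J(b')] restricted to the set of functions J with J ≥ 0 and J bounded above by the value of some proper policy. -/

import Mathlib

open Filter Topology

/-- Probability of reaching the goal set `G` within `n` steps under policy `π`. -/
noncomputable def polReachIter {B U : Type*} [Fintype B] [DecidableEq B]
    (p : B → U → B → ℝ) (π : B → U) (G : Finset B) : ℕ → B → ℝ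
  | 0, b => if b ∈ G then 1 else 0
  | n + 1, b =>
      if b ∈ G then 1 else ∑ b' : B, p b (π b) b' * polReachIter p π G n b'

/-- A policy is proper if it reaches `G` with probability 1 from every state. -/
def ProperPolicy {B U : Type*} [Fintype B] [DecidableEq B]
    (p : B → U → B → ℝ) (π : B → U) (G : Finset B) : Prop :=
  ∀ b : B, Tendsto (fun n => polReachIter p π G n b) atTop (nhds 1)

/-!
Value iteration from `0` is monotone, and under a proper policy `π` its `n`-th iterate is at most
`C · ∑_{k<n} P(τ > k)`, `τ` the hitting time of `G`. These survival probabilities decay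
geometrically (once they are `≤ 1/2` at some time `N`, the Markov property halves them every `N`
steps), so the iterates converge, to a fixed point since the Bellman operator is continuous.
For a nonnegative fixed point `J` with greedy policy `μ`, `c ≥ c_min` gives
`c_min · ∑_k P_μ(τ > k) ≤ J`, so `μ` is proper. If `J'` is another fixed point, then
`J' - J ≤ P_μ (J' - J)` off `G`, and iterating under the proper `μ` gives `J' ≤ J`.
-/

open Finset Function

theorem sum_range_le_of_le_mul_shift {f : ℕ → ℝ} {N : ℕ} {r : ℝ} (hf₀ : ∀ n, 0 ≤ f n)
    (hf₁ : ∀ n, f n ≤ 1) (hr₀ : 0 ≤ r) (hr₁ : r < 1) (hshift : ∀ n, f (n + N) ≤ r * f n)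
    (n : ℕ) : ∑ k ∈ range n, f k ≤ N / (1 - r) := by
  have hmono : ∀ m, ∑ k ∈ range n, f k ≤ ∑ k ∈ range (m + n), f k := fun m =>
    sum_le_sum_of_subset_of_nonneg (range_subset_range.2 (Nat.le_add_left n m))
      fun k _ _ => hf₀ k
  have key : ∑ k ∈ range (N + n), f k ≤ N + r * ∑ k ∈ range (N + n), f k :=
    calc ∑ k ∈ range (N + n), f k = ∑ k ∈ range N, f k + ∑ k ∈ range n, f (N + k) :=
          sum_range_add _ _ _
      _ ≤ N + ∑ k ∈ range n, r * f k := by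
          gcongr with k
          · exact (sum_le_card_nsmul _ _ 1 fun k _ => hf₁ k).trans_eq (by simp)
          · exact add_comm k N ▸ hshift k
      _ ≤ N + r * ∑ k ∈ range (N + n), f k := by
          rw [← mul_sum]
          exact add_le_add_right (mul_le_mul_of_nonneg_left (hmono N) hr₀) _
  rw [le_div_iff₀ (sub_pos.2 hr₁)]
  nlinarith [hmono N]

structure IsAbsorbingKernel {B U : Type*} [Fintype B] (p : B → U → B → ℝ) (G : Finset B) :
    Prop where
  nonneg : ∀ b u b', 0 ≤ p b u b'
  sum_eq_one : ∀ b u, ∑ b', p b u b' = 1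
  absorbing : ∀ g ∈ G, ∀ u, p g u g = 1

namespace IsAbsorbingKernel

variable {B U : Type*} [Fintype B] {p : B → U → B → ℝ} {G : Finset B}

theorem sum_mul_of_mem (hp : IsAbsorbingKernel p G) {g : B} (hg : g ∈ G) (u : U)
    (f : B → ℝ) : ∑ b', p g u b' * f b' = f g := by
  classical
  have hrest : ∑ b' ∈ univ.erase g, p g u b' = 0 := by
    have := add_sum_erase univ (p g u) (mem_univ g)
    rw [hp.sum_eq_one, hp.absorbing g hg] at this
    linarith
  have hzero : ∀ b' ≠ g, p g u b' = 0 := fun b' hb' =>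
    (sum_eq_zero_iff_of_nonneg fun x _ => hp.nonneg g u x).1 hrest b'
      (mem_erase.2 ⟨hb', mem_univ _⟩)
  rw [sum_eq_single g (fun b' _ hb' => by rw [hzero b' hb', zero_mul]) (by simp),
    hp.absorbing g hg, one_mul]

end IsAbsorbingKernel

section Survival

variable {B U : Type*} [Fintype B] [DecidableEq B] {p : B → U → B → ℝ} {G : Finset B}
  {π : B → U}

noncomputable def survivalProb (p : B → U → B → ℝ) (π : B → U) (G : Finset B) (n : ℕ)
    (b : B) : ℝ :=
  1 - polReachIter p π G n b

theorem survivalProb_of_mem (n : ℕ) {g : B} (hg : g ∈ G) : survivalProb p π G n g = 0 := by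
  cases n <;> simp [survivalProb, polReachIter, hg]

theorem survivalProb_zero_of_notMem {b : B} (hb : b ∉ G) : survivalProb p π G 0 b = 1 := by
  simp [survivalProb, polReachIter, hb]

theorem IsAbsorbingKernel.survivalProb_succ (hp : IsAbsorbingKernel p G) (n : ℕ) (b : B) :
    survivalProb p π G (n + 1) b = ∑ b', p b (π b) b' * survivalProb p π G n b' := by
  by_cases hb : b ∈ G
  · rw [hp.sum_mul_of_mem hb, survivalProb_of_mem _ hb, survivalProb_of_mem _ hb]
  · simp only [survivalProb, polReachIter, if_neg hb, mul_sub, sum_sub_distrib, mul_one,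
      hp.sum_eq_one]

theorem IsAbsorbingKernel.survivalProb_mem_Icc (hp : IsAbsorbingKernel p G) (n : ℕ) (b : B) :
    survivalProb p π G n b ∈ Set.Icc 0 1 := by
  induction n generalizing b with
  | zero => by_cases hb : b ∈ G <;> simp [survivalProb_of_mem, survivalProb_zero_of_notMem, hb]
  | succ n ih =>
    rw [hp.survivalProb_succ]
    refine ⟨sum_nonneg fun b' _ => mul_nonneg (hp.nonneg _ _ _) (ih b').1, ?_⟩
    calc ∑ b', p b (π b) b' * survivalProb p π G n b' ≤ ∑ b', p b (π b) b' :=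
          sum_le_sum fun b' _ => mul_le_of_le_one_right (hp.nonneg _ _ _) (ih b').2
      _ = 1 := hp.sum_eq_one _ _

theorem properPolicy_iff_tendsto_survivalProb :
    ProperPolicy p π G ↔ ∀ b, Tendsto (fun n => survivalProb p π G n b) atTop (𝓝 0) := by
  refine forall_congr' fun b => ?_
  rw [← tendsto_sub_nhds_zero_iff, ← neg_zero, ← tendsto_neg_iff]
  simp [survivalProb]

theorem IsAbsorbingKernel.sum_range_succ_survivalProb (hp : IsAbsorbingKernel p G) {b : B}
    (hb : b ∉ G) (n : ℕ) :
    ∑ k ∈ range (n + 1), survivalProb p π G k b =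
      1 + ∑ b', p b (π b) b' * ∑ k ∈ range n, survivalProb p π G k b' := by
  simp only [sum_range_succ', survivalProb_zero_of_notMem hb, hp.survivalProb_succ, mul_sum]
  rw [add_comm, sum_comm]

theorem IsAbsorbingKernel.survivalProb_add_le (hp : IsAbsorbingKernel p G) {N : ℕ} {r : ℝ}
    (hN : ∀ b, survivalProb p π G N b ≤ r) (n : ℕ) (b : B) :
    survivalProb p π G (n + N) b ≤ r * survivalProb p π G n b := by
  induction n generalizing b with
  | zero =>
    by_cases hb : b ∈ G
    · simp [survivalProb_of_mem _ hb]
    · simpa [survivalProb_zero_of_notMem hb] using hN b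
  | succ n ih =>
    rw [add_right_comm, hp.survivalProb_succ, hp.survivalProb_succ, mul_sum]
    exact sum_le_sum fun b' _ => by
      rw [mul_left_comm]; exact mul_le_mul_of_nonneg_left (ih b') (hp.nonneg _ _ _)

theorem ProperPolicy.exists_sum_survivalProb_le (hp : IsAbsorbingKernel p G)
    (hπ : ProperPolicy p π G) : ∃ K, ∀ n b, ∑ k ∈ range n, survivalProb p π G k b ≤ K := by
  have hsmall : ∀ᶠ N in atTop, ∀ b, survivalProb p π G N b ≤ 1 / 2 :=
    eventually_all.2 fun b => ((properPolicy_iff_tendsto_survivalProb.1 hπ b).eventually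
      (ge_mem_nhds (by norm_num))).mono fun _ h => h
  obtain ⟨N, hN⟩ := hsmall.exists
  exact ⟨N / (1 - 1 / 2), fun n b => sum_range_le_of_le_mul_shift
    (fun k => (hp.survivalProb_mem_Icc k b).1) (fun k => (hp.survivalProb_mem_Icc k b).2)
    (by norm_num) (by norm_num) (fun k => hp.survivalProb_add_le hN k b) n⟩

theorem ProperPolicy.nonpos_of_le_transition (hp : IsAbsorbingKernel p G)
    (hπ : ProperPolicy p π G) {D : B → ℝ} (hG : ∀ g ∈ G, D g ≤ 0)
    (hD : ∀ b ∉ G, D b ≤ ∑ b', p b (π b) b' * D b') : D ≤ 0 := by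
  obtain ⟨M, hM⟩ := Finite.exists_le D
  have hbound : ∀ n b, D b ≤ M * survivalProb p π G n b := by
    intro n
    induction n with
    | zero =>
      intro b
      by_cases hb : b ∈ G
      · simpa [survivalProb_of_mem _ hb] using hG b hb
      · simpa [survivalProb_zero_of_notMem hb] using hM b
    | succ n ih =>
      intro b
      by_cases hb : b ∈ G
      · simpa [survivalProb_of_mem _ hb] using hG b hb
      · calc D b ≤ ∑ b', p b (π b) b' * D b' := hD b hb
          _ ≤ ∑ b', p b (π b) b' * (M * survivalProb p π G n b') :=
            sum_le_sum fun b' _ => mul_le_mul_of_nonneg_left (ih b') (hp.nonneg _ _ _)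
          _ = M * survivalProb p π G (n + 1) b := by
            rw [hp.survivalProb_succ, mul_sum]
            exact sum_congr rfl fun _ _ => mul_left_comm _ _ _
  intro b
  have hlim := (properPolicy_iff_tendsto_survivalProb.1 hπ b).const_mul M
  rw [mul_zero] at hlim
  exact ge_of_tendsto' hlim fun n => hbound n b

end Survival

section Bellman

variable {B U : Type*} [Fintype B] [DecidableEq B] {p : B → U → B → ℝ} {c : B → U → ℝ}
  {G : Finset B}

noncomputable def bellman (p : B → U → B → ℝ) (c : B → U → ℝ) (G : Finset B) (J : B → ℝ)
    (b : B) : ℝ :=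
  if b ∈ G then 0 else ⨅ u, c b u + ∑ b', p b u b' * J b'

theorem isFixedPt_bellman_iff {J : B → ℝ} :
    IsFixedPt (bellman p c G) J ↔
      (∀ g ∈ G, J g = 0) ∧ ∀ b ∉ G, J b = ⨅ u, c b u + ∑ b', p b u b' * J b' := by
  refine funext_iff.trans ⟨fun h => ⟨fun g hg => ?_, fun b hb => ?_⟩, fun h b => ?_⟩
  · simpa [bellman, hg] using (h g).symm
  · simpa [bellman, hb] using (h b).symm
  · by_cases hb : b ∈ G
    · simp [bellman, hb, h.1 b hb]
    · simp [bellman, hb, h.2 b hb]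

theorem bellman_nonneg [Nonempty U] (hp : ∀ b u b', 0 ≤ p b u b')
    (hc : ∀ b ∉ G, ∀ u, 0 ≤ c b u) {J : B → ℝ} (hJ : 0 ≤ J) : 0 ≤ bellman p c G J := by
  intro b
  unfold bellman
  split_ifs with hb
  · rfl
  · exact le_ciInf fun u =>
      add_nonneg (hc b hb u) (sum_nonneg fun b' _ => mul_nonneg (hp b u b') (hJ b'))

variable [Finite U]

theorem bellman_le_of_notMem (J : B → ℝ) {b : B} (hb : b ∉ G) (u : U) :
    bellman p c G J b ≤ c b u + ∑ b', p b u b' * J b' := by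
  rw [bellman, if_neg hb]
  exact ciInf_le (Finite.bddBelow_range _) u

theorem monotone_bellman (hp : ∀ b u b', 0 ≤ p b u b') : Monotone (bellman p c G) := by
  intro J J' hJ b
  unfold bellman
  split_ifs
  · rfl
  · exact ciInf_mono (Finite.bddBelow_range _) fun u =>
      add_le_add_right (sum_le_sum fun b' _ => mul_le_mul_of_nonneg_left (hJ b') (hp b u b')) _

theorem continuous_bellman [Nonempty U] : Continuous (bellman p c G) := by
  have := Fintype.ofFinite U
  refine continuous_pi fun b => ?_
  unfold bellman
  split_ifs
  · exact continuous_const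
  · simp only [← Finset.inf'_univ_eq_ciInf]
    exact Continuous.finset_inf'_apply _ fun u _ => by fun_prop

theorem IsAbsorbingKernel.bellman_iterate_le (hp : IsAbsorbingKernel p G) {π : B → U}
    {C : ℝ} (hC : ∀ b ∉ G, c b (π b) ≤ C) (n : ℕ) (b : B) :
    (bellman p c G)^[n] 0 b ≤ C * ∑ k ∈ range n, survivalProb p π G k b := by
  induction n generalizing b with
  | zero => simp
  | succ n ih =>
    rw [iterate_succ_apply']
    by_cases hb : b ∈ G
    · simp [bellman, hb, survivalProb_of_mem _ hb]
    · calc bellman p c G ((bellman p c G)^[n] 0) b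
          ≤ c b (π b) + ∑ b', p b (π b) b' * (bellman p c G)^[n] 0 b' :=
            bellman_le_of_notMem _ hb _
        _ ≤ C + ∑ b', p b (π b) b' * (C * ∑ k ∈ range n, survivalProb p π G k b') :=
            add_le_add (hC b hb)
              (sum_le_sum fun b' _ => mul_le_mul_of_nonneg_left (ih b') (hp.nonneg _ _ _))
        _ = C * ∑ k ∈ range (n + 1), survivalProb p π G k b := by
            rw [hp.sum_range_succ_survivalProb hb, mul_add, mul_one, mul_sum univ]
            exact congrArg _ (sum_congr rfl fun _ _ => mul_left_comm _ _ _)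

theorem IsAbsorbingKernel.exists_isFixedPt_bellman [Nonempty U]
    (hp : IsAbsorbingKernel p G) (hc : ∀ b ∉ G, ∀ u, 0 ≤ c b u) {π : B → U}
    (hπ : ProperPolicy p π G) :
    ∃ J, IsFixedPt (bellman p c G) J ∧ 0 ≤ J := by
  set F := bellman p c G
  have hmono : Monotone fun n => F^[n] 0 :=
    (monotone_bellman hp.nonneg).monotone_iterate_of_le_map (bellman_nonneg hp.nonneg hc le_rfl)
  obtain ⟨C, hC⟩ := Finite.exists_le fun b => c b (π b)
  obtain ⟨K, hK⟩ := hπ.exists_sum_survivalProb_le hp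
  have hbdd : BddAbove (Set.range fun n => F^[n] 0) := by
    refine ⟨fun _ => max C 0 * K, ?_⟩
    rintro _ ⟨n, rfl⟩ b
    exact (hp.bellman_iterate_le (fun b _ => (hC b).trans (le_max_left C 0)) n b).trans
      (mul_le_mul_of_nonneg_left (hK n b) (le_max_right C 0))
  have hlim := tendsto_atTop_ciSup hmono hbdd
  exact ⟨_, isFixedPt_of_tendsto_iterate hlim continuous_bellman.continuousAt,
    le_ciSup hbdd 0⟩

theorem IsAbsorbingKernel.exists_properPolicy_of_isFixedPt [Nonempty U]
    (hp : IsAbsorbingKernel p G) {cmin : ℝ} (hcmin : 0 < cmin)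
    (hc : ∀ b ∉ G, ∀ u, cmin ≤ c b u)
    {J : B → ℝ} (hJ : IsFixedPt (bellman p c G) J) (hJ₀ : 0 ≤ J) :
    ∃ μ, ProperPolicy p μ G ∧ ∀ b ∉ G, J b = c b (μ b) + ∑ b', p b (μ b) b' * J b' := by
  obtain ⟨hJG, hJfix⟩ := isFixedPt_bellman_iff.1 hJ
  choose μ hμ using fun b =>
    exists_eq_ciInf_of_finite (f := fun u => c b u + ∑ b', p b u b' * J b')
  have hJμ : ∀ b ∉ G, J b = c b (μ b) + ∑ b', p b (μ b) b' * J b' :=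
    fun b hb => (hJfix b hb).trans (hμ b).symm
  have hsum : ∀ n b, cmin * ∑ k ∈ range n, survivalProb p μ G k b ≤ J b := by
    intro n
    induction n with
    | zero => exact fun b => by simpa using hJ₀ b
    | succ n ih =>
      intro b
      by_cases hb : b ∈ G
      · simp [survivalProb_of_mem _ hb, hJG b hb]
      · rw [hp.sum_range_succ_survivalProb hb, hJμ b hb, mul_add, mul_one, mul_sum univ]
        exact add_le_add (hc b hb _) (sum_le_sum fun b' _ => by
          rw [mul_left_comm]; exact mul_le_mul_of_nonneg_left (ih b') (hp.nonneg _ _ _))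
  refine ⟨μ, properPolicy_iff_tendsto_survivalProb.2 fun b => ?_, hJμ⟩
  have hS : Summable fun k => survivalProb p μ G k b :=
    summable_of_sum_range_le (fun k => (hp.survivalProb_mem_Icc k b).1)
      fun n => (le_div_iff₀' hcmin).2 (hsum n b)
  exact hS.tendsto_atTop_zero

theorem IsAbsorbingKernel.le_of_isFixedPt_bellman (hp : IsAbsorbingKernel p G)
    {J V : B → ℝ} (hJ : IsFixedPt (bellman p c G) J) (hV : IsFixedPt (bellman p c G) V) {μ : B → U}
    (hμ : ProperPolicy p μ G) (hVμ : ∀ b ∉ G, V b = c b (μ b) + ∑ b', p b (μ b) b' * V b') :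
    J ≤ V := by
  obtain ⟨hJG, -⟩ := isFixedPt_bellman_iff.1 hJ
  obtain ⟨hVG, -⟩ := isFixedPt_bellman_iff.1 hV
  refine sub_nonpos.1 <| hμ.nonpos_of_le_transition hp
    (fun g hg => by simp [hJG g hg, hVG g hg]) fun b hb => ?_
  have hJμ : J b ≤ c b (μ b) + ∑ b', p b (μ b) b' * J b' :=
    (congrFun hJ b).symm.le.trans (bellman_le_of_notMem J hb (μ b))
  simp only [Pi.sub_apply, mul_sub, sum_sub_distrib]
  linarith [hVμ b hb]

end Bellman

theorem ssp_bellman_unique_fixed_point_general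
    {B U : Type*} [Fintype B] [DecidableEq B] [Fintype U] [Nonempty U]
    (p : B → U → B → ℝ) (c : B → U → ℝ) (G : Finset B) (cmin : ℝ)
    (hp0 : ∀ b u b', 0 ≤ p b u b') (hp1 : ∀ b u, ∑ b' : B, p b u b' = 1)
    (habsG : ∀ g ∈ G, ∀ u, p g u g = 1)
    (hcmin : 0 < cmin) (hc : ∀ b, b ∉ G → ∀ u, cmin ≤ c b u)
    (hproper : ∃ π : B → U, ProperPolicy p π G) :
    ∃! J : B → ℝ,
      -- J vanishes on G, is nonnegative, and is bounded above by the value of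
      -- some proper policy ...
      ((∀ g ∈ G, J g = 0) ∧ (∀ b, 0 ≤ J b) ∧
        (∃ (π : B → U) (V : B → ℝ), ProperPolicy p π G ∧
          (∀ g ∈ G, V g = 0) ∧ (∀ b, 0 ≤ V b) ∧
          (∀ b, b ∉ G → V b = c b (π b) + ∑ b' : B, p b (π b) b' * V b') ∧
          (∀ b, J b ≤ V b))) ∧
      -- ... and J is a fixed point of the Bellman operator
      (∀ b, b ∉ G → J b = ⨅ u : U, (c b u + ∑ b' : B, p b u b' * J b')) := by
  have hp : IsAbsorbingKernel p G := ⟨hp0, hp1, habsG⟩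
  obtain ⟨π, hπ⟩ := hproper
  obtain ⟨J, hJ, hJ₀⟩ :=
    hp.exists_isFixedPt_bellman (fun b hb u => hcmin.le.trans (hc b hb u)) hπ
  obtain ⟨μ, hμ, hJμ⟩ := hp.exists_properPolicy_of_isFixedPt hcmin hc hJ hJ₀
  obtain ⟨hJG, hJfix⟩ := isFixedPt_bellman_iff.1 hJ
  refine ⟨J, ⟨⟨hJG, hJ₀, μ, J, hμ, hJG, hJ₀, hJμ, fun _ => le_rfl⟩, hJfix⟩, ?_⟩
  rintro J' ⟨⟨hJ'G, hJ'₀, -⟩, hJ'fix⟩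
  have hJ' : IsFixedPt (bellman p c G) J' := isFixedPt_bellman_iff.2 ⟨hJ'G, hJ'fix⟩
  obtain ⟨μ', hμ', hJ'μ'⟩ := hp.exists_properPolicy_of_isFixedPt hcmin hc hJ' hJ'₀
  exact le_antisymm (hp.le_of_isFixedPt_bellman hJ' hJ hμ hJμ)
    (hp.le_of_isFixedPt_bellman hJ hJ' hμ' hJ'μ')

/-- Stochastic-shortest-path Bellman uniqueness: with per-step costs `≥ c_min > 0`
off the zero-cost absorbing goal set `G` and at least one proper policy, the optimal
value function `J*` is the unique fixed point of the (undiscounted) Bellman operator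
among nonnegative functions vanishing on `G` and dominated by the value of some
proper policy. -/
theorem ssp_bellman_unique_fixed_point
    {B U : Type*} [Fintype B] [DecidableEq B] [Fintype U] [Nonempty U]
    (p : B → U → B → ℝ) (c : B → U → ℝ) (G : Finset B) (cmin : ℝ)
    (hp0 : ∀ b u b', 0 ≤ p b u b') (hp1 : ∀ b u, ∑ b' : B, p b u b' = 1)
    (habsG : ∀ g ∈ G, ∀ u, p g u g = 1)
    (hGc : ∀ g ∈ G, ∀ u, c g u = 0)
    (hcmin : 0 < cmin) (hc : ∀ b, b ∉ G → ∀ u, cmin ≤ c b u)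
    (hproper : ∃ π : B → U, ProperPolicy p π G) :
    ∃! J : B → ℝ,
      -- J vanishes on G, is nonnegative, and is bounded above by the value of
      -- some proper policy ...
      ((∀ g ∈ G, J g = 0) ∧ (∀ b, 0 ≤ J b) ∧
        (∃ (π : B → U) (V : B → ℝ), ProperPolicy p π G ∧
          (∀ g ∈ G, V g = 0) ∧ (∀ b, 0 ≤ V b) ∧
          (∀ b, b ∉ G → V b = c b (π b) + ∑ b' : B, p b (π b) b' * V b') ∧
          (∀ b, J b ≤ V b))) ∧
      -- ... and J is a fixed point of the Bellman operator
      (∀ b, b ∉ G → J b = ⨅ u : U, (c b u + ∑ b' : B, p b u b' * J b')) :=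
  ssp_bellman_unique_fixed_point_general p c G cmin hp0 hp1 habsG hcmin hc hproper
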